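/- arXiv:1710.02774 — 5 statements merged into one kernel-verified Lean document; each statement's English description precedes it below -/
import Mathlib

section
/- Let A be an n×n real symmetric matrix with eigendecomposition A = QΛQ^T, v ∈ ℝ^n with ‖v‖=1, ρ ∈ ℝ, z = Q^T v with z_j ≠ 0 for all j, and suppose t is a root of the secular equation w(t) = 1 + ρΣ_{i=1}^n z_i²/(λ_i − t) with t distinct from all λ_i. Then p = Q(Λ − tI)^{-1}z is an eigenvector of A + ρvv^T with eigenvalue t. -/
open Matrix BigOperators

/-- explicit eigenvector formula for a root of the secular equation. -/
theorem eigenvector_formula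
    (n : ℕ) (A Q : Matrix (Fin n) (Fin n) ℝ) (d : Fin n → ℝ)
    (hQ : Qᵀ * Q = 1)
    (hA : A = Q * Matrix.diagonal d * Qᵀ)
    (v : Fin n → ℝ) (hv : Real.sqrt (∑ i, v i ^ 2) = 1)
    (ρ : ℝ) (z : Fin n → ℝ) (hz : z = Qᵀ *ᵥ v)
    (hznz : ∀ j, z j ≠ 0)
    (t : ℝ) (ht : ∀ i, t ≠ d i)
    (hroot : 1 + ρ * ∑ i, z i ^ 2 / (d i - t) = 0)
    (p : Fin n → ℝ) (hp : p = Q *ᵥ (fun i => z i / (d i - t))) :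
    p ≠ 0 ∧ (A + ρ • Matrix.vecMulVec v v) *ᵥ p = t • p := by
  have hQQ : Q * Qᵀ = 1 := mul_eq_one_comm.mp hQ
  set u : Fin n → ℝ := fun i => z i / (d i - t) with hu
  have hdt : ∀ i, d i - t ≠ 0 := fun i => sub_ne_zero.mpr (Ne.symm (ht i))
  have hun : ∀ j, u j ≠ 0 := fun j => div_ne_zero (hznz j) (hdt j)
  -- n > 0
  have hn : 0 < n := by
    by_contra h
    push_neg at h
    interval_cases n
    simp at hroot
  -- Qᵀ p = u
  have hQp : Qᵀ *ᵥ p = u := by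
    rw [hp, Matrix.mulVec_mulVec, hQ, Matrix.one_mulVec]
  constructor
  · intro h0
    have h1 := hQp
    rw [h0, Matrix.mulVec_zero] at h1
    exact hun ⟨0, hn⟩ (by rw [← h1]; rfl)
  · -- v = Q z
    have hvz : v = Q *ᵥ z := by
      rw [hz, Matrix.mulVec_mulVec, hQQ, Matrix.one_mulVec]
    -- v ⬝ᵥ p = z ⬝ᵥ u
    have hvp : v ⬝ᵥ p = ∑ i, z i ^ 2 / (d i - t) := by
      rw [hp, Matrix.dotProduct_mulVec, ← Matrix.mulVec_transpose, ← hz]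
      simp [dotProduct, hu, sq, mul_div_assoc]
    have hS : ρ * (v ⬝ᵥ p) = -1 := by rw [hvp]; linarith
    -- A p = Q *ᵥ (fun i => d i * u i)
    have hAQ : A * Q = Q * Matrix.diagonal d := by
      rw [hA, mul_assoc, hQ, mul_one]
    have hAp : A *ᵥ p = Q *ᵥ (fun i => d i * u i) := by
      have hd : Matrix.diagonal d *ᵥ u = fun i => d i * u i := by
        ext i
        rw [Matrix.mulVec_diagonal]
      rw [hp, Matrix.mulVec_mulVec, hAQ, ← Matrix.mulVec_mulVec, hd]
    -- vecMulVec part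
    have hvv : Matrix.vecMulVec v v *ᵥ p = (v ⬝ᵥ p) • v := by
      ext i
      simp [Matrix.vecMulVec, Matrix.mulVec, dotProduct, Finset.mul_sum, mul_assoc,
        mul_comm, mul_left_comm]
    have hvec : ((fun i => d i * u i) + (-1 : ℝ) • z) = t • u := by
      ext i
      have h := hdt i
      simp only [Pi.add_apply, Pi.smul_apply, smul_eq_mul, hu]
      field_simp
      ring
    calc (A + ρ • Matrix.vecMulVec v v) *ᵥ p
        = A *ᵥ p + ρ • (Matrix.vecMulVec v v *ᵥ p) := by
          rw [Matrix.add_mulVec, Matrix.smul_mulVec]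
      _ = Q *ᵥ (fun i => d i * u i) + (ρ * (v ⬝ᵥ p)) • v := by
          rw [hAp, hvv, smul_smul]
      _ = Q *ᵥ (fun i => d i * u i) + Q *ᵥ ((-1 : ℝ) • z) := by
          rw [hS, hvz, Matrix.mulVec_smul]
      _ = Q *ᵥ ((fun i => d i * u i) + (-1 : ℝ) • z) := by
          rw [Matrix.mulVec_add]
      _ = Q *ᵥ (t • u) := by rw [hvec]
      _ = t • p := by rw [Matrix.mulVec_smul, hp]
end

section
/- Let λ_1 > λ_2 > … > λ_m > μ be real numbers, z_1,…,z_m nonzero reals with Σ_{i=1}^m z_i² < 1, and ρ > 0. Then the first-order truncated secular equation w_1(t;μ) = 1 + ρ(Σ_{i=1}^m z_i²/(λ_i − t) + (1 − Σ_{i=1}^m z_i²)/(μ − t)) has exactly one root in each interval (λ_j, λ_{j-1}) for 2 ≤ j ≤ m, and exactly one root in the interval (λ_1, λ_1 + ρ]. In particular it has at least m roots in (λ_m, λ_1 + ρ]. -/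
/-!
On every interval free of poles, `w₁` is continuous and strictly increasing, since all weights
`z i ^ 2` and `1 - ∑ z i ^ 2` are positive; it tends to `-∞` just right of each pole and to `+∞`
just left of it. By the intermediate value theorem there is exactly one root between consecutive
poles `d j < d (j - 1)`. On `(d 0, d 0 + ρ]` the root exists as well because every term
`c / (p - t)` is at least `-c / ρ` at `t = d 0 + ρ` and the weights sum to `1`, so
`w₁ (d 0 + ρ) ≥ 0`. The `m` roots so found lie in disjoint intervals.
-/

open Filter Set Topology Function

lemma tendsto_div_sub_nhdsGT_atBot {a c : ℝ} (hc : 0 < c) :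
    Tendsto (fun t => c / (a - t)) (𝓝[>] a) atBot := by
  have h : Tendsto (a - ·) (𝓝[>] a) (𝓝[<] 0) := by
    rw [← sub_self a]; exact map_subLeft_nhdsGT.le
  simpa [div_eq_mul_inv] using (tendsto_inv_nhdsLT_zero.comp h).const_mul_atBot hc

lemma tendsto_div_sub_nhdsLT_atTop {a c : ℝ} (hc : 0 < c) :
    Tendsto (fun t => c / (a - t)) (𝓝[<] a) atTop := by
  have h : Tendsto (a - ·) (𝓝[<] a) (𝓝[>] 0) := by
    rw [← sub_self a]; exact map_subLeft_nhdsLT.le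
  simpa [div_eq_mul_inv] using (tendsto_inv_nhdsGT_zero.comp h).const_mul_atTop hc

lemma div_sub_lt_div_sub {c p u v : ℝ} (hc : 0 < c) (huv : u < v) (hp : p ∉ Icc u v) :
    c / (p - u) < c / (p - v) := by
  obtain h | h : p < u ∨ v < p := by
    by_contra! h
    exact hp h
  · have := div_lt_div_of_pos_left hc (sub_pos.2 h) (sub_lt_sub_right huv p)
    rw [← neg_sub u p, ← neg_sub v p, div_neg, div_neg]
    exact neg_lt_neg this
  · exact div_lt_div_of_pos_left hc (sub_pos.2 h) (sub_lt_sub_left huv p)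

lemma existsUnique_eq_zero_of_strictMonoOn {f : ℝ → ℝ} {s : Set ℝ} [s.OrdConnected]
    (hf : ContinuousOn f s) (hmono : StrictMonoOn f s) {x y : ℝ} (hx : x ∈ s) (hy : y ∈ s)
    (hfx : f x ≤ 0) (hfy : 0 ≤ f y) : ∃! t, t ∈ s ∧ f t = 0 := by
  have hxy : x ≤ y := by
    by_contra! hyx
    exact (hmono hy hx hyx).not_ge (hfx.trans hfy)
  have hsub : Icc x y ⊆ s := Set.Icc_subset s hx hy
  obtain ⟨t, ht, hft⟩ := intermediate_value_Icc hxy (hf.mono hsub) ⟨hfx, hfy⟩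
  exact ⟨t, ⟨hsub ht, hft⟩, fun u hu => hmono.injOn hu.1 (hsub ht) (hu.2.trans hft.symm)⟩

noncomputable def secularFun {ι : Type*} [Fintype ι] (ρ : ℝ) (c p : ι → ℝ) (t : ℝ) : ℝ :=
  1 + ρ * ∑ i, c i / (p i - t)

namespace secularFun

variable {ι : Type*} [Fintype ι] {ρ : ℝ} {c p : ι → ℝ}

lemma continuousOn {s : Set ℝ} (hs : ∀ i, p i ∉ s) : ContinuousOn (secularFun ρ c p) s := by
  refine continuousOn_const.add (continuousOn_const.mul (continuousOn_finsetSum _ fun i _ => ?_))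
  exact continuousOn_const.div (continuousOn_const.sub continuousOn_id)
    fun t ht => sub_ne_zero.2 fun h => hs i (h ▸ ht)

lemma strictMonoOn [Nonempty ι] (hρ : 0 < ρ) (hc : ∀ i, 0 < c i) {s : Set ℝ} [s.OrdConnected]
    (hs : ∀ i, p i ∉ s) : StrictMonoOn (secularFun ρ c p) s := by
  intro u hu v hv huv
  refine add_lt_add_right (mul_lt_mul_of_pos_left ?_ hρ) 1
  exact Finset.sum_lt_sum_of_nonempty Finset.univ_nonempty fun i _ =>
    div_sub_lt_div_sub (hc i) huv fun hi => hs i (Set.Icc_subset s hu hv hi)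

lemma eq_add_sum_erase [DecidableEq ι] (j : ι) (t : ℝ) :
    secularFun ρ c p t =
      1 + ρ * (c j / (p j - t) + ∑ i ∈ Finset.univ.erase j, c i / (p i - t)) := by
  rw [secularFun, ← Finset.add_sum_erase _ _ (Finset.mem_univ j)]

lemma tendsto_sum_erase_div_sub (hp : Injective p) (j : ι) [DecidableEq ι] :
    Tendsto (fun t => ∑ i ∈ Finset.univ.erase j, c i / (p i - t)) (𝓝 (p j))
      (𝓝 (∑ i ∈ Finset.univ.erase j, c i / (p i - p j))) :=
  tendsto_finsetSum _ fun _ hi => tendsto_const_nhds.div (tendsto_const_nhds.sub tendsto_id)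
    (sub_ne_zero.2 (hp.ne (Finset.ne_of_mem_erase hi)))

lemma tendsto_nhdsGT_atBot (hρ : 0 < ρ) (hp : Injective p) {j : ι} (hcj : 0 < c j) :
    Tendsto (secularFun ρ c p) (𝓝[>] (p j)) atBot := by
  classical
  rw [show secularFun ρ c p = _ from funext (eq_add_sum_erase j)]
  exact tendsto_atBot_add_const_left _ 1 <| ((tendsto_div_sub_nhdsGT_atBot hcj).atBot_add
    ((tendsto_sum_erase_div_sub hp j).mono_left nhdsWithin_le_nhds)).const_mul_atBot hρ

lemma tendsto_nhdsLT_atTop (hρ : 0 < ρ) (hp : Injective p) {j : ι} (hcj : 0 < c j) :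
    Tendsto (secularFun ρ c p) (𝓝[<] (p j)) atTop := by
  classical
  rw [show secularFun ρ c p = _ from funext (eq_add_sum_erase j)]
  exact tendsto_atTop_add_const_left _ 1 <| ((tendsto_div_sub_nhdsLT_atTop hcj).atTop_add
    ((tendsto_sum_erase_div_sub hp j).mono_left nhdsWithin_le_nhds)).const_mul_atTop hρ

lemma nonneg_at_add (hρ : 0 < ρ) (hc : ∀ i, 0 ≤ c i) (hsum : ∑ i, c i ≤ 1) {a : ℝ}
    (hp : ∀ i, p i ≤ a) : 0 ≤ secularFun ρ c p (a + ρ) := by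
  have hterm : ∀ i, -(c i / ρ) ≤ c i / (p i - (a + ρ)) := fun i => by
    rw [← neg_sub, div_neg, neg_le_neg_iff]
    exact div_le_div_of_nonneg_left (hc i) hρ (by linarith [hp i])
  have := Finset.sum_le_sum fun i (_ : i ∈ Finset.univ) => hterm i
  rw [Finset.sum_neg_distrib, ← Finset.sum_div] at this
  have := mul_le_mul_of_nonneg_left this hρ.le
  rw [mul_neg, mul_div_cancel₀ _ hρ.ne'] at this
  unfold secularFun
  linarith

lemma existsUnique_eq_zero_Ioo (hρ : 0 < ρ) (hc : ∀ i, 0 < c i) (hp : Injective p) {j k : ι}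
    (hjk : p j < p k) (hgap : ∀ i, p i ∉ Ioo (p j) (p k)) :
    ∃! t, t ∈ Ioo (p j) (p k) ∧ secularFun ρ c p t = 0 := by
  have : Nonempty ι := ⟨j⟩
  obtain ⟨x, hfx, hx⟩ := (((tendsto_nhdsGT_atBot hρ hp (hc j)).eventually_lt_atBot 0).and
    (Ioo_mem_nhdsGT hjk)).exists
  obtain ⟨y, hfy, hy⟩ := (((tendsto_nhdsLT_atTop hρ hp (hc k)).eventually_gt_atTop 0).and
    (Ioo_mem_nhdsLT hjk)).exists
  exact existsUnique_eq_zero_of_strictMonoOn (continuousOn hgap) (strictMonoOn hρ hc hgap) hx hy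
    hfx.le hfy.le

lemma existsUnique_eq_zero_Ioc (hρ : 0 < ρ) (hc : ∀ i, 0 < c i) (hp : Injective p)
    (hsum : ∑ i, c i ≤ 1) {j : ι} (hmax : ∀ i, p i ≤ p j) :
    ∃! t, t ∈ Ioc (p j) (p j + ρ) ∧ secularFun ρ c p t = 0 := by
  have : Nonempty ι := ⟨j⟩
  have hpoles : ∀ i, p i ∉ Ioc (p j) (p j + ρ) := fun i hi => (hmax i).not_gt hi.1
  have hlt : p j < p j + ρ := lt_add_of_pos_right _ hρ
  obtain ⟨x, hfx, hx⟩ := (((tendsto_nhdsGT_atBot hρ hp (hc j)).eventually_lt_atBot 0).and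
    (Ioo_mem_nhdsGT hlt)).exists
  exact existsUnique_eq_zero_of_strictMonoOn (continuousOn hpoles) (strictMonoOn hρ hc hpoles)
    (Ioo_subset_Ioc_self hx) ⟨hlt, le_rfl⟩ hfx.le
    (nonneg_at_add hρ (fun i => (hc i).le) hsum hmax)

end secularFun

lemma StrictAnti.apply_notMem_Ioo_pred {α : Type*} [Preorder α] {m : ℕ} {d : Fin m → α}
    (hd : StrictAnti d) (i j : Fin m) :
    d i ∉ Ioo (d j) (d ⟨j - 1, (Nat.sub_le _ _).trans_lt j.isLt⟩) := by
  rintro ⟨hlo, hhi⟩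
  rcases le_or_gt j i with h | h
  · exact (hd.antitone h).not_gt hlo
  · exact (hd.antitone (Fin.le_def.2 (Nat.le_sub_one_of_lt h))).not_gt hhi

lemma exists_injective_of_interlacing {m : ℕ} (hm : 0 < m) {d : Fin m → ℝ} (hd : StrictAnti d)
    {P : ℝ → Prop} {b : ℝ}
    (hgap : ∀ j : Fin m, 1 ≤ (j : ℕ) →
      ∃ t ∈ Ioo (d j) (d ⟨j - 1, (Nat.sub_le _ _).trans_lt j.isLt⟩), P t)
    (htop : ∃ t ∈ Ioc (d ⟨0, hm⟩) b, P t) :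
    ∃ t : Fin m → ℝ, Injective t ∧
      ∀ i, t i ∈ Ioc (d ⟨m - 1, Nat.sub_one_lt_of_lt hm⟩) b ∧ P (t i) := by
  obtain ⟨t₀, ⟨ht₀, ht₀b⟩, hPt₀⟩ := htop
  have key : ∀ i : Fin m, ∃ t, d i < t ∧ (∀ k < i, t ≤ d k) ∧ t ≤ b ∧ P t := by
    rintro ⟨_ | i, hi⟩
    · exact ⟨t₀, ht₀, fun k hk => absurd (Fin.lt_def.1 hk) (Nat.not_lt_zero _), ht₀b, hPt₀⟩
    · obtain ⟨t, ⟨hlo, hhi⟩, hP⟩ := hgap ⟨i + 1, hi⟩ (Nat.le_add_left 1 i)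
      replace hhi : t < d ⟨i, Nat.lt_of_succ_lt hi⟩ := hhi
      have hle : ∀ k : Fin m, (k : ℕ) ≤ i → d ⟨i, Nat.lt_of_succ_lt hi⟩ ≤ d k :=
        fun k hk => hd.antitone (Fin.le_def.2 hk)
      refine ⟨t, hlo, fun k hk => hhi.le.trans (hle k (Nat.lt_succ_iff.1 hk)), ?_, hP⟩
      linarith [hle ⟨0, hm⟩ (Nat.zero_le _)]
  choose t hlo hhi hb hP using key
  have hanti : StrictAnti t := fun k i hki => (hhi i k hki).trans_lt (hlo k)
  exact ⟨t, hanti.injective, fun i =>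
    ⟨⟨(hd.antitone (Fin.le_def.2 (Nat.le_sub_one_of_lt i.isLt))).trans_lt (hlo i), hb i⟩, hP i⟩⟩

/-- root localization for the first-order truncated secular
equation: one root in each gap `(λ_j, λ_{j-1})`, one in `(λ_1, λ_1 + ρ]`, and
hence at least `m` roots in `(λ_m, λ_1 + ρ]`. -/
theorem truncated_secular_roots
    (m : ℕ) (hm : 0 < m) (d : Fin m → ℝ) (hd : StrictAnti d)
    (μ : ℝ) (hμ : μ < d ⟨m - 1, by omega⟩)
    (z : Fin m → ℝ) (hz : ∀ i, z i ≠ 0) (hzsum : ∑ i, z i ^ 2 < 1)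
    (ρ : ℝ) (hρ : 0 < ρ)
    (w₁ : ℝ → ℝ)
    (hw₁ : w₁ = fun t =>
      1 + ρ * ((∑ i, z i ^ 2 / (d i - t)) + (1 - ∑ i, z i ^ 2) / (μ - t))) :
    (∀ j : Fin m, ∀ hj : 1 ≤ (j : ℕ),
      ∃! t : ℝ, t ∈ Set.Ioo (d j) (d ⟨(j : ℕ) - 1, by omega⟩) ∧ w₁ t = 0) ∧
    (∃! t : ℝ, t ∈ Set.Ioc (d ⟨0, hm⟩) (d ⟨0, hm⟩ + ρ) ∧ w₁ t = 0) ∧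
    (∃ t : Fin m → ℝ, Function.Injective t ∧
      ∀ i, t i ∈ Set.Ioc (d ⟨m - 1, by omega⟩) (d ⟨0, hm⟩ + ρ) ∧ w₁ (t i) = 0) := by
  -- `w₁` is the secular function with poles `μ` (index `none`) and `d i` (index `some i`).
  set c : Option (Fin m) → ℝ := fun o => o.elim (1 - ∑ i, z i ^ 2) (fun i => z i ^ 2)
  set p : Option (Fin m) → ℝ := fun o => o.elim μ d
  have hw : w₁ = secularFun ρ c p := by
    subst hw₁
    funext t
    simp [secularFun, Fintype.sum_option, c, p, add_comm]
  have hc : ∀ o, 0 < c o := by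
    rintro (_ | i)
    exacts [sub_pos.2 hzsum, pow_two_pos_of_ne_zero (hz i)]
  have hsum : ∑ o, c o ≤ 1 := by simp [Fintype.sum_option, c]
  have hμd : ∀ i, μ < d i := fun i =>
    hμ.trans_le (hd.antitone (Fin.le_def.2 (Nat.le_sub_one_of_lt i.isLt)))
  have hp : Injective p := by
    rintro (_ | i) (_ | k) h
    · rfl
    · exact absurd h (hμd k).ne
    · exact absurd h (hμd i).ne'
    · exact congrArg some (hd.injective h)
  have hgaps : ∀ j : Fin m, ∀ hj : 1 ≤ (j : ℕ),
      ∃! t, t ∈ Ioo (d j) (d ⟨j - 1, by omega⟩) ∧ w₁ t = 0 := by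
    intro j hj
    rw [hw]
    refine secularFun.existsUnique_eq_zero_Ioo (j := some j) (k := some ⟨j - 1, by omega⟩)
      hρ hc hp (hd (Fin.lt_def.2 (Nat.sub_lt hj Nat.one_pos))) ?_
    rintro (_ | i)
    exacts [fun h => (hμd j).not_gt h.1, hd.apply_notMem_Ioo_pred i j]
  have htop : ∃! t, t ∈ Ioc (d ⟨0, hm⟩) (d ⟨0, hm⟩ + ρ) ∧ w₁ t = 0 := by
    rw [hw]
    refine secularFun.existsUnique_eq_zero_Ioc (j := some ⟨0, hm⟩) hρ hc hp hsum ?_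
    rintro (_ | i)
    · exact (hμd _).le
    · exact hd.antitone (Fin.le_def.2 (Nat.zero_le _))
  exact ⟨hgaps, htop,
    exists_injective_of_interlacing hm hd (fun j hj => (hgaps j hj).exists) htop.exists⟩
end

section
/- Let A = QΛQ^T be an n×n real symmetric matrix, let t, μ be reals with t ≠ λ_k and t ≠ μ, v ∈ ℝ^n with ‖v‖=1, p = Q(Λ − tI)^{-1}Q^T v, and let p̃ = Q^{(m)}(Δ^{(m)})^{-1}(Q^{(m)})^T v + (1/(μ − t)) r, where Δ^{(m)} = diag(λ_1 − t, …, λ_m − t) and r = v − Q^{(m)}(Q^{(m)})^T v. Then ‖p − p̃‖² = Σ_{k=m+1}^n ((μ − λ_k)⟨q_k, v⟩ / ((μ − t)(λ_k − t)))², and hence ‖p − p̃‖ ≤ max_{m+1≤k≤n}|λ_k − μ| / (|μ − t|·min_{m+1≤k≤n}|λ_k − t|). -/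
/-!
Both `p` and `p̃` are expanded in the orthonormal eigenbasis `q_k`. They agree on the first `m`
coordinates, and on the remaining ones `p̃` replaces `1 / (λ_k - t)` by `1 / (μ - t)`, so the error
has coordinates `(μ - λ_k) ⟨q_k, v⟩ / ((μ - t)(λ_k - t))` for `k ≥ m` only. Parseval turns this into
the exact formula, and bounding each factor by its extreme value over `k ≥ m`, together with
`∑ ⟨q_k, v⟩² = ‖v‖² = 1`, gives the estimate.
-/

open Matrix BigOperators
open Finset

section Orthonormal

variable {ι κ R : Type*} [Fintype ι] [CommSemiring R]

lemma sum_smul_dotProduct_sum_smul_of_orthonormal [DecidableEq κ] {q : κ → ι → R}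
    (hq : ∀ k l, q k ⬝ᵥ q l = if k = l then 1 else 0) (s : Finset κ) (a : κ → R) :
    (∑ k ∈ s, a k • q k) ⬝ᵥ (∑ k ∈ s, a k • q k) = ∑ k ∈ s, a k ^ 2 := by
  simp only [sum_dotProduct, dotProduct_sum, smul_dotProduct, dotProduct_smul, hq, smul_eq_mul,
    mul_ite, mul_one, mul_zero, sq]
  exact sum_congr rfl fun k hk => by simp [hk]

lemma transpose_row_dotProduct_of_transpose_mul_self [DecidableEq κ] {Q : Matrix ι κ R}
    (hQ : Qᵀ * Q = 1) (k l : κ) : Qᵀ k ⬝ᵥ Qᵀ l = if k = l then 1 else 0 :=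
  congrFun (congrFun hQ k) l

lemma mulVec_eq_sum_smul_transpose_row (Q : Matrix κ ι R) (c : ι → R) :
    Q *ᵥ c = ∑ k, c k • Qᵀ k := by
  simp only [mulVec_eq_sum, op_smul_eq_smul]

lemma sum_sq_eq_dotProduct_self (x : ι → R) : ∑ i, x i ^ 2 = x ⬝ᵥ x := by
  simp only [dotProduct, sq]

end Orthonormal

lemma eq_sum_smul_transpose_row_of_transpose_mul_self {ι R : Type*} [Fintype ι] [DecidableEq ι]
    [CommRing R] {Q : Matrix ι ι R} (hQ : Qᵀ * Q = 1) (v : ι → R) :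
    v = ∑ k, (Qᵀ k ⬝ᵥ v) • Qᵀ k := by
  rw [← mulVec_eq_sum_smul_transpose_row]
  change v = Q *ᵥ (Qᵀ *ᵥ v)
  rw [mulVec_mulVec, mul_eq_one_comm.mp hQ, one_mulVec]

lemma sum_div_smul_sub_truncation_eq {κ 𝕜 E : Type*} [Fintype κ] [DecidableEq κ] [Field 𝕜]
    [AddCommGroup E] [Module 𝕜 E] (q : κ → E) (w d : κ → 𝕜) {t μ : 𝕜} (hd : ∀ k, d k ≠ t)
    (hμ : μ ≠ t) (T : Finset κ) :
    ∑ k, (w k / (d k - t)) • q k - (∑ k ∈ T, (w k / (d k - t)) • q k +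
        (1 / (μ - t)) • (∑ k, w k • q k - ∑ k ∈ T, w k • q k)) =
      ∑ k ∈ Tᶜ, ((μ - d k) * w k / ((μ - t) * (d k - t))) • q k := by
  rw [← sum_add_sum_compl T, ← sum_add_sum_compl T (fun k => w k • q k), add_sub_cancel_left,
    smul_sum, add_sub_add_left_eq_sub, ← sum_sub_distrib]
  refine sum_congr rfl fun k _ => ?_
  have hdk : d k - t ≠ 0 := sub_ne_zero.mpr (hd k)
  have hμt : μ - t ≠ 0 := sub_ne_zero.mpr hμ
  rw [smul_smul, ← sub_smul]
  congr 1
  field_simp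
  ring

lemma sqrt_sum_sq_le_of_abs_le_mul {ι : Type*} {s : Finset ι} {a w : ι → ℝ} {B : ℝ}
    (hB : 0 ≤ B) (h : ∀ k ∈ s, |a k| ≤ B * |w k|) (hw : ∑ k ∈ s, w k ^ 2 ≤ 1) :
    √(∑ k ∈ s, a k ^ 2) ≤ B := by
  rw [Real.sqrt_le_left hB]
  calc ∑ k ∈ s, a k ^ 2 ≤ ∑ k ∈ s, B ^ 2 * w k ^ 2 := by
        refine sum_le_sum fun k hk => ?_
        rw [← sq_abs (a k), ← sq_abs (w k), ← mul_pow]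
        exact pow_le_pow_left₀ (abs_nonneg _) (h k hk) 2
    _ = B ^ 2 * ∑ k ∈ s, w k ^ 2 := (mul_sum _ _ _).symm
    _ ≤ B ^ 2 := mul_le_of_le_one_right (sq_nonneg B) hw

lemma abs_mul_div_mul_le {x y z w M c : ℝ} (hx : |x| ≤ M) (hy : y ≠ 0) (hc : 0 < c)
    (hz : c ≤ |z|) : |x * w / (y * z)| ≤ M / (|y| * c) * |w| := by
  rw [abs_div, abs_mul, abs_mul, div_mul_eq_mul_div]
  have hy' : 0 < |y| := abs_pos.mpr hy
  exact div_le_div₀ (mul_nonneg ((abs_nonneg x).trans hx) (abs_nonneg w))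
    (mul_le_mul_of_nonneg_right hx (abs_nonneg w)) (mul_pos hy' hc)
    (mul_le_mul_of_nonneg_left hz hy'.le)

/-- exact error of the first-order truncated eigenvector formula
and the resulting bound. -/
theorem first_order_eigenvector_error
    (n m : ℕ) (hm : m < n)
    (Q : Matrix (Fin n) (Fin n) ℝ) (d : Fin n → ℝ)
    (hQ : Qᵀ * Q = 1)
    (q : Fin n → Fin n → ℝ) (hq : ∀ i j, q i j = Q j i)
    (v : Fin n → ℝ) (hv : Real.sqrt (∑ i, v i ^ 2) = 1)
    (t μ : ℝ) (ht : ∀ k, t ≠ d k) (htμ : t ≠ μ)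
    (r : Fin n → ℝ)
    (hr : r = v - ∑ i ∈ Finset.univ.filter (fun i : Fin n => (i : ℕ) < m),
      (q i ⬝ᵥ v) • q i)
    (p : Fin n → ℝ)
    (hp : p = Q *ᵥ (fun k => (q k ⬝ᵥ v) / (d k - t)))
    (pt : Fin n → ℝ)
    (hpt : pt = (∑ k ∈ Finset.univ.filter (fun k : Fin n => (k : ℕ) < m),
        ((q k ⬝ᵥ v) / (d k - t)) • q k) + (1 / (μ - t)) • r) :
    (∑ i, (p i - pt i) ^ 2 =
      ∑ k ∈ Finset.univ.filter (fun k : Fin n => m ≤ (k : ℕ)),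
        ((μ - d k) * (q k ⬝ᵥ v) / ((μ - t) * (d k - t))) ^ 2) ∧
    Real.sqrt (∑ i, (p i - pt i) ^ 2) ≤
      ((Finset.univ.filter (fun k : Fin n => m ≤ (k : ℕ))).sup'
          ⟨⟨m, hm⟩, by simp⟩ (fun k => |d k - μ|)) /
        (|μ - t| *
          (Finset.univ.filter (fun k : Fin n => m ≤ (k : ℕ))).inf'
            ⟨⟨m, hm⟩, by simp⟩ (fun k => |d k - t|)) := by
  obtain rfl : q = Qᵀ := funext₂ hq
  set S := univ.filter fun k : Fin n => m ≤ (k : ℕ)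
  have hS : S = (univ.filter fun k : Fin n => (k : ℕ) < m)ᶜ := by ext; simp [S]
  have hexpand := eq_sum_smul_transpose_row_of_transpose_mul_self hQ v
  have herr : p - pt = ∑ k ∈ S, ((μ - d k) * (Qᵀ k ⬝ᵥ v) / ((μ - t) * (d k - t))) • Qᵀ k := by
    have := sum_div_smul_sub_truncation_eq (fun k => Qᵀ k) (fun k => Qᵀ k ⬝ᵥ v) d
      (fun k => (ht k).symm) htμ.symm (univ.filter fun k : Fin n => (k : ℕ) < m)
    rwa [← hexpand, ← mulVec_eq_sum_smul_transpose_row, ← hr, ← hp, ← hpt, ← hS] at this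
  have horth := transpose_row_dotProduct_of_transpose_mul_self hQ
  have hexact : ∑ i, (p i - pt i) ^ 2 =
      ∑ k ∈ S, ((μ - d k) * (Qᵀ k ⬝ᵥ v) / ((μ - t) * (d k - t))) ^ 2 := by
    rw [show ∑ i, (p i - pt i) ^ 2 = ∑ i, (p - pt) i ^ 2 from rfl, sum_sq_eq_dotProduct_self, herr,
      sum_smul_dotProduct_sum_smul_of_orthonormal horth]
  have hmS : (⟨m, hm⟩ : Fin n) ∈ S := by simp [S]
  have hgap : 0 < S.inf' ⟨_, hmS⟩ fun k => |d k - t| :=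
    lt_inf'_iff _ |>.mpr fun k _ => abs_pos.mpr (sub_ne_zero.mpr (ht k).symm)
  have hparseval : ∑ k, (Qᵀ k ⬝ᵥ v) ^ 2 = 1 := by
    rw [← sum_smul_dotProduct_sum_smul_of_orthonormal horth, ← hexpand,
      ← sum_sq_eq_dotProduct_self, ← Real.sqrt_eq_one.mp hv]
  refine ⟨hexact, hexact ▸ sqrt_sum_sq_le_of_abs_le_mul (w := fun k => Qᵀ k ⬝ᵥ v) ?_
    (fun k hk => ?_) (hparseval ▸ sum_le_univ_sum_of_nonneg fun k => sq_nonneg _)⟩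
  · exact div_nonneg ((abs_nonneg _).trans (le_sup' (fun k => |d k - μ|) hmS)) (by positivity)
  · exact abs_mul_div_mul_le (abs_sub_comm (d k) μ ▸ le_sup' (fun k => |d k - μ|) hk)
      (sub_ne_zero.mpr htμ.symm) hgap (inf'_le _ hk)
end

section
/- Weyl's inequality for singular values: for any square real matrices S, E of the same size and any index i, |σ_i(S + E) − σ_i(S)| ≤ ‖E‖₂, where σ_i denotes the i-th largest singular value and ‖·‖₂ the spectral norm. -/
/-!
The right singular vectors of `M` with index `≤ i` span an `(i + 1)`-dimensional space on which
`‖M x‖ ≥ σᵢ(M) ‖x‖`, and those with index `≥ i` span an `(n - i)`-dimensional space on which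
`‖M x‖ ≤ σᵢ(M) ‖x‖`. For two matrices `A`, `B` the first space of `A` and the second of `B`
have dimensions adding up to `n + 1`, so they share some `x ≠ 0`, and
`σᵢ(A) ‖x‖ ≤ ‖A x‖ ≤ ‖B x‖ + ‖(A - B) x‖ ≤ (σᵢ(B) + ‖A - B‖) ‖x‖`.
Exchanging `A` and `B`, and bounding `‖E‖` by `σ₀(E)`, gives the inequality.
-/

open Matrix BigOperators

/-- The nonincreasing rearrangement of the square roots of the eigenvalues of
`Mᴴ * M`: the `i`-th largest singular value of a real square matrix `M`. -/
noncomputable def singVal {n : ℕ} (M : Matrix (Fin n) (Fin n) ℝ) (i : Fin n) : ℝ :=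
  Real.sqrt ((Matrix.isHermitian_conjTranspose_mul_self M).eigenvalues
    (Tuple.sort (fun j =>
      -Real.sqrt ((Matrix.isHermitian_conjTranspose_mul_self M).eigenvalues j)) i))

open RCLike ContinuousLinearMap
open scoped InnerProductSpace InnerProduct

section OrthonormalEigenbasis

variable {𝕜 E F ι : Type*} [RCLike 𝕜] [NormedAddCommGroup E] [InnerProductSpace 𝕜 E]
  [NormedAddCommGroup F] [InnerProductSpace 𝕜 F]

lemma Orthonormal.inner_eq_zero_of_mem_span_image {v : ι → E} (hv : Orthonormal 𝕜 v)
    {s : Set ι} {k : ι} (hk : k ∉ s) {x : E} (hx : x ∈ Submodule.span 𝕜 (v '' s)) :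
    ⟪v k, x⟫_𝕜 = 0 := by
  refine Submodule.mem_orthogonal_singleton_iff_inner_right.mp (Submodule.span_le.mpr ?_ hx)
  rintro _ ⟨m, hm, rfl⟩
  exact Submodule.mem_orthogonal_singleton_iff_inner_right.mpr
    (hv.inner_eq_zero fun h => hk (h ▸ hm))

variable [Fintype ι]

lemma OrthonormalBasis.finrank_span_image (b : OrthonormalBasis ι 𝕜 E) (s : Finset ι) :
    Module.finrank 𝕜 (Submodule.span 𝕜 (b '' s)) = s.card := by
  rw [Set.image_eq_range]
  exact (finrank_span_eq_card (b.orthonormal.linearIndependent.comp _ Subtype.val_injective)).trans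
    (Fintype.card_coe s)

namespace ContinuousLinearMap

variable [CompleteSpace E] [CompleteSpace F] (A : E →L[𝕜] F) {b : OrthonormalBasis ι 𝕜 E}
  {μ : ι → ℝ}

lemma norm_apply_sq_eq_sum (hb : ∀ k, (A† ∘L A) (b k) = (μ k : 𝕜) • b k) (x : E) :
    ‖A x‖ ^ 2 = ∑ k, μ k * ‖⟪b k, x⟫_𝕜‖ ^ 2 := by
  have hcoord : ∀ k, ⟪b k, (A† ∘L A) x⟫_𝕜 = μ k * ⟪b k, x⟫_𝕜 := fun k => by
    rw [comp_apply, adjoint_inner_right, ← adjoint_inner_left, ← comp_apply, hb,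
      inner_smul_left, conj_ofReal]
  rw [apply_norm_sq_eq_inner_adjoint_right, ← b.sum_inner_mul_inner, map_sum]
  refine Finset.sum_congr rfl fun k _ => ?_
  rw [hcoord, mul_left_comm, re_ofReal_mul, inner_mul_symm_re_eq_norm, norm_mul,
    ← inner_conj_symm, norm_conj, sq]

lemma norm_apply_sq_le_of_mem_span (hb : ∀ k, (A† ∘L A) (b k) = (μ k : 𝕜) • b k) {s : Set ι}
    {B : ℝ} (hμ : ∀ k ∈ s, μ k ≤ B) {x : E} (hx : x ∈ Submodule.span 𝕜 (b '' s)) :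
    ‖A x‖ ^ 2 ≤ B * ‖x‖ ^ 2 := by
  rw [norm_apply_sq_eq_sum A hb, ← b.sum_sq_norm_inner_right, Finset.mul_sum]
  refine Finset.sum_le_sum fun k _ => ?_
  by_cases hk : k ∈ s
  · exact mul_le_mul_of_nonneg_right (hμ k hk) (sq_nonneg _)
  · simp [b.orthonormal.inner_eq_zero_of_mem_span_image hk hx]

lemma le_norm_apply_sq_of_mem_span (hb : ∀ k, (A† ∘L A) (b k) = (μ k : 𝕜) • b k) {s : Set ι}
    {B : ℝ} (hμ : ∀ k ∈ s, B ≤ μ k) {x : E} (hx : x ∈ Submodule.span 𝕜 (b '' s)) :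
    B * ‖x‖ ^ 2 ≤ ‖A x‖ ^ 2 := by
  rw [norm_apply_sq_eq_sum A hb, ← b.sum_sq_norm_inner_right, Finset.mul_sum]
  refine Finset.sum_le_sum fun k _ => ?_
  by_cases hk : k ∈ s
  · exact mul_le_mul_of_nonneg_right (hμ k hk) (sq_nonneg _)
  · simp [b.orthonormal.inner_eq_zero_of_mem_span_image hk hx]

end ContinuousLinearMap

end OrthonormalEigenbasis

lemma Submodule.inf_ne_bot_of_finrank_lt_add {K V : Type*} [DivisionRing K] [AddCommGroup V]
    [Module K V] [FiniteDimensional K V] {W₁ W₂ : Submodule K V}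
    (h : Module.finrank K V < Module.finrank K W₁ + Module.finrank K W₂) : W₁ ⊓ W₂ ≠ ⊥ :=
  fun hbot => (finrank_add_finrank_le_of_disjoint (disjoint_iff.mpr hbot)).not_gt h

section SingVal

variable {n : ℕ}

lemma singVal_nonneg (M : Matrix (Fin n) (Fin n) ℝ) (i : Fin n) : 0 ≤ singVal M i :=
  Real.sqrt_nonneg _

lemma singVal_antitone (M : Matrix (Fin n) (Fin n) ℝ) : Antitone (singVal M) := fun _ _ hij =>
  neg_le_neg_iff.mp <| Tuple.monotone_sort
    (fun j => -√((isHermitian_conjTranspose_mul_self M).eigenvalues j)) hij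

noncomputable def rightSingularBasis (M : Matrix (Fin n) (Fin n) ℝ) :
    OrthonormalBasis (Fin n) ℝ (EuclideanSpace ℝ (Fin n)) :=
  (isHermitian_conjTranspose_mul_self M).eigenvectorBasis.reindex
    (Tuple.sort fun j => -√((isHermitian_conjTranspose_mul_self M).eigenvalues j)).symm

lemma adjoint_comp_self_rightSingularBasis (M : Matrix (Fin n) (Fin n) ℝ) (j : Fin n) :
    ((toEuclideanCLM (𝕜 := ℝ) M)† ∘L toEuclideanCLM (𝕜 := ℝ) M) (rightSingularBasis M j) =
      (singVal M j ^ 2) • rightSingularBasis M j := by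
  rw [← star_eq_adjoint, ← map_star, ← ContinuousLinearMap.mul_def, ← map_mul,
    star_eq_conjTranspose, singVal,
    Real.sq_sqrt ((posSemidef_conjTranspose_mul_self M).eigenvalues_nonneg _)]
  apply WithLp.ofLp_injective
  simp only [rightSingularBasis, OrthonormalBasis.reindex_apply, Equiv.symm_symm,
    ofLp_toEuclideanCLM, WithLp.ofLp_smul]
  exact (isHermitian_conjTranspose_mul_self M).mulVec_eigenvectorBasis _

lemma norm_toEuclideanCLM_le_of_mem_span {M : Matrix (Fin n) (Fin n) ℝ} {i : Fin n}
    {x : EuclideanSpace ℝ (Fin n)}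
    (hx : x ∈ Submodule.span ℝ (rightSingularBasis M '' Set.Ici i)) :
    ‖toEuclideanCLM (𝕜 := ℝ) M x‖ ≤ singVal M i * ‖x‖ := by
  refine (pow_le_pow_iff_left₀ (norm_nonneg _)
    (mul_nonneg (singVal_nonneg M i) (norm_nonneg x)) two_ne_zero).mp ?_
  rw [mul_pow]
  refine norm_apply_sq_le_of_mem_span _ (adjoint_comp_self_rightSingularBasis M)
    (fun k hk => ?_) hx
  exact pow_le_pow_left₀ (singVal_nonneg M k) (singVal_antitone M hk) 2

lemma le_norm_toEuclideanCLM_of_mem_span {M : Matrix (Fin n) (Fin n) ℝ} {i : Fin n}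
    {x : EuclideanSpace ℝ (Fin n)}
    (hx : x ∈ Submodule.span ℝ (rightSingularBasis M '' Set.Iic i)) :
    singVal M i * ‖x‖ ≤ ‖toEuclideanCLM (𝕜 := ℝ) M x‖ := by
  refine (pow_le_pow_iff_left₀ (mul_nonneg (singVal_nonneg M i) (norm_nonneg x))
    (norm_nonneg _) two_ne_zero).mp ?_
  rw [mul_pow]
  refine le_norm_apply_sq_of_mem_span _ (adjoint_comp_self_rightSingularBasis M)
    (fun k hk => ?_) hx
  exact pow_le_pow_left₀ (singVal_nonneg M i) (singVal_antitone M hk) 2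

lemma opNorm_toEuclideanCLM_le_singVal (hn : 0 < n) (M : Matrix (Fin n) (Fin n) ℝ) :
    ‖toEuclideanCLM (𝕜 := ℝ) M‖ ≤ singVal M ⟨0, hn⟩ := by
  refine ContinuousLinearMap.opNorm_le_bound _ (singVal_nonneg _ _) fun x => ?_
  refine norm_toEuclideanCLM_le_of_mem_span ?_
  have hIci : Set.Ici (⟨0, hn⟩ : Fin n) = Set.univ :=
    Set.eq_univ_of_forall fun k => Nat.zero_le k.val
  rw [hIci, Set.image_univ]
  simpa using (rightSingularBasis M).toBasis.mem_span x

lemma singVal_le_add_opNorm_sub (A B : Matrix (Fin n) (Fin n) ℝ) (i : Fin n) :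
    singVal A i ≤ singVal B i + ‖toEuclideanCLM (𝕜 := ℝ) (A - B)‖ := by
  have hdim : Module.finrank ℝ (EuclideanSpace ℝ (Fin n)) <
      Module.finrank ℝ (Submodule.span ℝ (rightSingularBasis A '' ↑(Finset.Iic i))) +
        Module.finrank ℝ (Submodule.span ℝ (rightSingularBasis B '' ↑(Finset.Ici i))) := by
    rw [finrank_euclideanSpace_fin, OrthonormalBasis.finrank_span_image,
      OrthonormalBasis.finrank_span_image, Fin.card_Iic, Fin.card_Ici]
    omega
  obtain ⟨x, hx, hx0⟩ :=
    Submodule.exists_mem_ne_zero_of_ne_bot (Submodule.inf_ne_bot_of_finrank_lt_add hdim)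
  rw [Submodule.mem_inf, Finset.coe_Iic, Finset.coe_Ici] at hx
  have hsplit : toEuclideanCLM (𝕜 := ℝ) A x =
      toEuclideanCLM (𝕜 := ℝ) B x + toEuclideanCLM (𝕜 := ℝ) (A - B) x := by
    simp [map_sub]
  refine le_of_mul_le_mul_right ?_ (norm_pos_iff.mpr hx0)
  calc singVal A i * ‖x‖ ≤ ‖toEuclideanCLM (𝕜 := ℝ) A x‖ :=
        le_norm_toEuclideanCLM_of_mem_span hx.1
    _ ≤ ‖toEuclideanCLM (𝕜 := ℝ) B x‖ + ‖toEuclideanCLM (𝕜 := ℝ) (A - B) x‖ :=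
      hsplit ▸ norm_add_le _ _
    _ ≤ singVal B i * ‖x‖ + ‖toEuclideanCLM (𝕜 := ℝ) (A - B)‖ * ‖x‖ :=
      add_le_add (norm_toEuclideanCLM_le_of_mem_span hx.2) (ContinuousLinearMap.le_opNorm _ _)
    _ = (singVal B i + ‖toEuclideanCLM (𝕜 := ℝ) (A - B)‖) * ‖x‖ := by ring

lemma abs_singVal_sub_le_opNorm_sub (A B : Matrix (Fin n) (Fin n) ℝ) (i : Fin n) :
    |singVal A i - singVal B i| ≤ ‖toEuclideanCLM (𝕜 := ℝ) (A - B)‖ := by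
  have hAB := singVal_le_add_opNorm_sub A B i
  have hBA := singVal_le_add_opNorm_sub B A i
  rw [← neg_sub, map_neg, norm_neg] at hBA
  exact abs_sub_le_iff.mpr ⟨by linarith, by linarith⟩

end SingVal

/-- Weyl's inequality for singular values; the spectral norm of
`E` is its largest singular value. -/
theorem weyl_singular_values
    (n : ℕ) (hn : 0 < n) (S E : Matrix (Fin n) (Fin n) ℝ) (i : Fin n) :
    |singVal (S + E) i - singVal S i| ≤ singVal E ⟨0, hn⟩ := by
  calc |singVal (S + E) i - singVal S i| ≤ ‖toEuclideanCLM (𝕜 := ℝ) (S + E - S)‖ :=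
        abs_singVal_sub_le_opNorm_sub _ _ i
    _ ≤ singVal E ⟨0, hn⟩ := by
      rw [add_sub_cancel_left]
      exact opNorm_toEuclideanCLM_le_singVal hn E
end

section
/- Let B, T̃ ∈ ℝ^{n×n} and ℝ^{m×m} respectively with B symmetric and T̃ diagonal, let P̃ ∈ ℝ^{n×m}, and suppose P̃ = P̄(I + E) where P̄ ∈ ℝ^{n×m} and E ∈ ℝ^{m×m}. If G = P̃^T P̃ − I satisfies ‖G‖_F < 1/4 and ‖E‖_F ≤ 2‖G‖_F, then ‖B P̄ − P̄ T̃‖_F ≤ ‖B P̃ − P̃ T̃‖_F + 2‖G‖_F ‖P̄‖_F (‖B‖_F + ‖T̃‖_F). -/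
open Matrix BigOperators

/-- The Frobenius norm of a real matrix. -/
noncomputable def frobNorm {n m : ℕ} (M : Matrix (Fin n) (Fin m) ℝ) : ℝ :=
  Real.sqrt (∑ i, ∑ j, M i j ^ 2)

attribute [local instance] Matrix.frobeniusSeminormedAddCommGroup

lemma frobNorm_eq {n m : ℕ} (M : Matrix (Fin n) (Fin m) ℝ) : frobNorm M = ‖M‖ := by
  rw [frobNorm, Matrix.frobenius_norm_def]
  rw [Real.sqrt_eq_rpow]
  norm_num [Real.norm_eq_abs, sq_abs]

/-- re-orthogonalization degrades the eigenpair residual by at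
most `2‖G‖_F ‖P̄‖_F (‖B‖_F + ‖T̃‖_F)`. -/
theorem reorthogonalization_residual_bound
    (n m : ℕ)
    (B : Matrix (Fin n) (Fin n) ℝ) (hB : B.IsHermitian)
    (T : Matrix (Fin m) (Fin m) ℝ) (hT : T.IsDiag)
    (Pt Pb : Matrix (Fin n) (Fin m) ℝ)
    (E G : Matrix (Fin m) (Fin m) ℝ)
    (hPE : Pt = Pb * (1 + E))
    (hG : G = Ptᵀ * Pt - 1)
    (hGsmall : frobNorm G < 1 / 4)
    (hEG : frobNorm E ≤ 2 * frobNorm G) :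
    frobNorm (B * Pb - Pb * T) ≤
      frobNorm (B * Pt - Pt * T) +
        2 * frobNorm G * frobNorm Pb * (frobNorm B + frobNorm T) := by
  simp only [frobNorm_eq] at *
  have key : B * Pb - Pb * T = (B * Pt - Pt * T) - (B * (Pb * E)) + (Pb * E) * T := by
    subst hPE
    simp only [Matrix.mul_add, Matrix.add_mul, Matrix.mul_one, Matrix.one_mul, Matrix.mul_assoc]
    abel
  rw [key]
  have h1 : ‖(B * Pt - Pt * T) - (B * (Pb * E)) + (Pb * E) * T‖ ≤
      ‖B * Pt - Pt * T‖ + ‖B * (Pb * E)‖ + ‖(Pb * E) * T‖ := by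
    calc _ ≤ ‖(B * Pt - Pt * T) - (B * (Pb * E))‖ + ‖(Pb * E) * T‖ := norm_add_le _ _
    _ ≤ _ := by gcongr; exact norm_sub_le _ _
  refine h1.trans ?_
  have hE0 : (0:ℝ) ≤ ‖E‖ := norm_nonneg _
  have hPb0 : (0:ℝ) ≤ ‖Pb‖ := norm_nonneg _
  have h2 : ‖B * (Pb * E)‖ ≤ ‖B‖ * (‖Pb‖ * ‖E‖) :=
    (Matrix.frobenius_norm_mul _ _).trans (by gcongr; exact Matrix.frobenius_norm_mul _ _)
  have h3 : ‖(Pb * E) * T‖ ≤ ‖Pb‖ * ‖E‖ * ‖T‖ :=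
    (Matrix.frobenius_norm_mul _ _).trans (by gcongr; exact Matrix.frobenius_norm_mul _ _)
  have hG0 : (0:ℝ) ≤ ‖G‖ := norm_nonneg _
  nlinarith [mul_nonneg (mul_nonneg hPb0 (norm_nonneg B)) (sub_nonneg.2 hEG),
    mul_nonneg (mul_nonneg hPb0 (norm_nonneg T)) (sub_nonneg.2 hEG)]
end
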